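/- arXiv:1610.04369 — 5 statements merged into one kernel-verified Lean document; each statement's English description precedes it below -/
import Mathlib

section
/- For every natural number m, there exist complex numbers λ_0, …, λ_{2m} such that for all real x, (1+x^2)^m · e^{iπx^2} = Σ_{j=0}^{2m} λ_j · (d^j/dx^j)(e^{iπx^2}). -/
/-!
Differentiating `exp (a t²)` multiplies it by `2 a t`, so its `j`-th derivative is
`P_j(t) exp (a t²)` with `P_0 = 1` and `P_{j+1} = P_j' + 2 a X P_j`. For `a ≠ 0` the polynomial
`P_j` has degree exactly `j` and leading coefficient `(2a)^j`, so `P_0, …, P_n` span the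
polynomials of degree at most `n`; in particular `(1 + X²)^m` is a combination of
`P_0, …, P_{2m}`.
-/

open Complex Finset Polynomial

namespace Polynomial

section CommSemiring

variable {R : Type*} [CommSemiring R]

/-- The polynomial `P_j` with `(d/dt)^j exp (a t²) = P_j(t) exp (a t²)`, for `c = 2a`. -/
noncomputable def gaussianDerivPoly (c : R) : ℕ → R[X]
  | 0 => 1
  | j + 1 => derivative (gaussianDerivPoly c j) + C c * X * gaussianDerivPoly c j

@[simp]
lemma gaussianDerivPoly_zero (c : R) : gaussianDerivPoly c 0 = 1 := rfl

lemma gaussianDerivPoly_succ (c : R) (j : ℕ) :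
    gaussianDerivPoly c (j + 1) =
      derivative (gaussianDerivPoly c j) + C c * X * gaussianDerivPoly c j := rfl

lemma natDegree_gaussianDerivPoly_le (c : R) (j : ℕ) :
    (gaussianDerivPoly c j).natDegree ≤ j := by
  induction j with
  | zero => simp
  | succ j ih =>
    rw [gaussianDerivPoly_succ]
    refine (natDegree_add_le _ _).trans (max_le ?_ ?_)
    · exact (natDegree_derivative_le _).trans (by omega)
    · rw [mul_assoc]
      exact (natDegree_C_mul_le _ _).trans
        (natDegree_mul_le.trans (by have := natDegree_X_le (R := R); omega))

lemma coeff_gaussianDerivPoly_self (c : R) (j : ℕ) : (gaussianDerivPoly c j).coeff j = c ^ j := by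
  induction j with
  | zero => simp
  | succ j ih =>
    have hderiv : (derivative (gaussianDerivPoly c j)).coeff (j + 1) = 0 :=
      coeff_eq_zero_of_natDegree_lt <|
        (natDegree_derivative_le _).trans_lt (by have := natDegree_gaussianDerivPoly_le c j; omega)
    rw [gaussianDerivPoly_succ, coeff_add, hderiv, mul_assoc, coeff_C_mul, coeff_X_mul, ih,
      pow_succ']
    ring

lemma degree_gaussianDerivPoly [Nontrivial R] {c : R} (hc : IsUnit c) (j : ℕ) :
    (gaussianDerivPoly c j).degree = j :=
  degree_eq_of_le_of_coeff_ne_zero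
    (natDegree_le_iff_degree_le.mp (natDegree_gaussianDerivPoly_le c j))
    (by simpa [coeff_gaussianDerivPoly_self] using (hc.pow j).ne_zero)

lemma leadingCoeff_gaussianDerivPoly [Nontrivial R] {c : R} (hc : IsUnit c) (j : ℕ) :
    (gaussianDerivPoly c j).leadingCoeff = c ^ j := by
  rw [leadingCoeff, natDegree_eq_of_degree_eq_some (degree_gaussianDerivPoly hc j),
    coeff_gaussianDerivPoly_self]

noncomputable def gaussianDerivSeq [Nontrivial R] {c : R} (hc : IsUnit c) : Sequence R where
  elems' := gaussianDerivPoly c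
  degree_eq' := degree_gaussianDerivPoly hc

@[simp]
lemma gaussianDerivSeq_apply [Nontrivial R] {c : R} (hc : IsUnit c) (j : ℕ) :
    gaussianDerivSeq hc j = gaussianDerivPoly c j := rfl

end CommSemiring

lemma Sequence.exists_sum_smul_eq {R : Type*} [Ring R] (S : Sequence R) {n : ℕ}
    (hS : ∀ i ≤ n, IsUnit (S i).leadingCoeff) {q : R[X]} (hq : q.natDegree ≤ n) :
    ∃ lam : ℕ → R, ∑ j ∈ range (n + 1), lam j • S j = q := by
  have hmem : q ∈ degreeLT R (n + 1) := by
    rw [mem_degreeLT]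
    exact (degree_le_natDegree.trans (WithBot.coe_le_coe.mpr hq)).trans_lt
      (WithBot.coe_lt_coe.mpr n.lt_succ_self)
  rw [← S.span_degreeLT fun i hi => hS i (Nat.lt_succ_iff.mp hi), ← coe_range] at hmem
  exact (Submodule.mem_span_image_finset_iff_exists_fun' R).mp hmem

end Polynomial

lemma hasDerivAt_cexp_mul_sq (a : ℂ) (x : ℝ) :
    HasDerivAt (fun t : ℝ => cexp (a * t ^ 2)) (2 * a * x * cexp (a * x ^ 2)) x := by
  have hpoly : HasDerivAt (fun z : ℂ => a * z ^ 2) (a * (2 * x)) x := by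
    simpa using (hasDerivAt_pow 2 (x : ℂ)).const_mul a
  convert hpoly.cexp.comp_ofReal using 1
  ring

lemma iteratedDeriv_cexp_mul_sq (a : ℂ) (j : ℕ) :
    iteratedDeriv j (fun t : ℝ => cexp (a * t ^ 2)) =
      fun x : ℝ => (gaussianDerivPoly (2 * a) j).eval (x : ℂ) * cexp (a * x ^ 2) := by
  induction j with
  | zero => simp
  | succ j ih =>
    ext x
    have hpoly : HasDerivAt (fun t : ℝ => (gaussianDerivPoly (2 * a) j).eval (t : ℂ))
        ((derivative (gaussianDerivPoly (2 * a) j)).eval (x : ℂ)) x :=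
      ((gaussianDerivPoly (2 * a) j).hasDerivAt (x : ℂ)).comp_ofReal
    rw [iteratedDeriv_succ, ih, (hpoly.fun_mul (hasDerivAt_cexp_mul_sq a x)).deriv,
      gaussianDerivPoly_succ]
    simp only [eval_add, eval_mul, eval_C, eval_X]
    ring

theorem exists_sum_iteratedDeriv_cexp_mul_sq_eq {a : ℂ} (ha : a ≠ 0) {q : ℂ[X]} {n : ℕ}
    (hq : q.natDegree ≤ n) :
    ∃ lam : ℕ → ℂ, ∀ x : ℝ, q.eval (x : ℂ) * cexp (a * x ^ 2) =
      ∑ j ∈ range (n + 1), lam j * iteratedDeriv j (fun t : ℝ => cexp (a * t ^ 2)) x := by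
  have hc : IsUnit (2 * a) := (mul_ne_zero two_ne_zero ha).isUnit
  obtain ⟨lam, hlam⟩ := (gaussianDerivSeq hc).exists_sum_smul_eq
    (fun i _ => by simpa [leadingCoeff_gaussianDerivPoly hc] using hc.pow i) hq
  refine ⟨lam, fun x => ?_⟩
  simp only [iteratedDeriv_cexp_mul_sq, ← hlam, gaussianDerivSeq_apply, eval_finsetSum, eval_smul,
    smul_eq_mul, Finset.sum_mul, mul_assoc]

/-- For every natural number `m`, there exist complex numbers `λ_0, …, λ_{2m}` such that
for all real `x`, `(1+x^2)^m · e^{iπx²} = Σ_{j=0}^{2m} λ_j · (d^j/dx^j)(e^{iπx²})`. -/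
theorem oscillating_gaussian_derivative_identity (m : ℕ) :
    ∃ lam : ℕ → ℂ, ∀ x : ℝ,
      ((1 + (x : ℂ) ^ 2) ^ m) * Complex.exp (Complex.I * Real.pi * x ^ 2) =
        ∑ j ∈ Finset.range (2 * m + 1),
          lam j * iteratedDeriv j (fun t : ℝ => Complex.exp (Complex.I * Real.pi * t ^ 2)) x := by
  have hbase : (1 + (X : ℂ[X]) ^ 2).natDegree ≤ 2 := (natDegree_add_le _ _).trans (by simp)
  have hdeg := (natDegree_pow_le_of_le m hbase).trans_eq (mul_comm m 2)
  obtain ⟨lam, hlam⟩ := exists_sum_iteratedDeriv_cexp_mul_sq_eq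
    (mul_ne_zero I_ne_zero (ofReal_ne_zero.mpr Real.pi_ne_zero)) hdeg
  exact ⟨lam, fun x => by simpa using hlam x⟩
end

section
/- Let α, β > 0 with |α−1| + β < 1, and let ε ∈ (2|α−1|, 1−β+|α−1|]. Let κ : ℝ → ℝ be smooth and compactly supported with κ = 1 on [−1,1] and 0 ≤ κ ≤ 1, and let k > 0. Then the integral over ℝ^d of (1−κ(|x|))^3 · |x|^{1−β+|α−1|−(d+ε)} · sin^2(k|x|^α) dx is infinite. -/
open MeasureTheory Real Metric Set
open scoped ENNReal NNReal

lemma sin_sq_half (n : ℕ) (t : ℝ) (h1 : 2 * π * n + π / 4 ≤ t)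
    (h2 : t ≤ 2 * π * n + 3 * π / 4) : (1:ℝ)/2 ≤ Real.sin t ^ 2 := by
  have hc : Real.cos (2 * t) ≤ 0 := by
    have := Real.cos_add_int_mul_two_pi (2 * t - (2 * n : ℤ) * (2 * π)) (2 * n)
    rw [sub_add_cancel] at this
    rw [this]
    have hπ := Real.pi_pos
    apply Real.cos_nonpos_of_pi_div_two_le_of_le
    · push_cast; linarith
    · push_cast; linarith
  rw [Real.sin_sq_eq_half_sub]
  linarith

lemma harmonic_top (C : ℝ) (hC : 0 < C) (N : ℕ) :
    ∑' n : ℕ, ENNReal.ofReal (C / ((n : ℝ) + N + 1)) = ⊤ := by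
  by_contra h
  have hsum : Summable (fun n : ℕ => C / ((n : ℝ) + N + 1)) := by
    have h2 : ∑' n : ℕ, ((C / ((n : ℝ) + N + 1)).toNNReal : ℝ≥0∞) ≠ ⊤ := h
    have h3 : Summable (fun n : ℕ => (C / ((n : ℝ) + N + 1)).toNNReal) :=
      ENNReal.tsum_coe_ne_top_iff_summable.mp h2
    have h4 := NNReal.summable_coe.mpr h3
    refine h4.congr fun n => ?_
    rw [Real.coe_toNNReal]
    positivity
  have h5 : Summable (fun n : ℕ => ((n : ℝ) + N + 1)⁻¹) := by
    have := hsum.mul_left C⁻¹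
    refine this.congr fun n => ?_
    field_simp
  have h6 : Summable (fun n : ℕ => ((n + (N + 1) : ℕ) : ℝ)⁻¹) := by
    refine h5.congr fun n => ?_
    push_cast; ring_nf
  exact Real.not_summable_natCast_inv ((summable_nat_add_iff (N + 1)).mp h6)

lemma bernoulli_aux {x c : ℝ} (hx0 : 0 < x) (hx1 : x ≤ 1) (hc : 0 < c) :
    min 1 c * (1 - x) ≤ 1 - x ^ c := by
  rcases le_total c 1 with h | h
  · have hb : (1 + (x - 1)) ^ c ≤ 1 + c * (x - 1) :=
      rpow_one_add_le_one_add_mul_self (by linarith) hc.le h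
    rw [add_sub_cancel] at hb
    have : min 1 c * (1 - x) ≤ c * (1 - x) :=
      mul_le_mul_of_nonneg_right (min_le_right _ _) (by linarith)
    nlinarith
  · have hb : x ^ c ≤ x ^ (1:ℝ) := Real.rpow_le_rpow_of_exponent_ge hx0 hx1 h
    rw [Real.rpow_one] at hb
    have : min 1 c * (1 - x) ≤ 1 * (1 - x) :=
      mul_le_mul_of_nonneg_right (min_le_left _ _) (by linarith)
    nlinarith


lemma annulus_aux (X Y W : ℝ) (hX : X ≠ 0) :
    X⁻¹ * (1/2) * ((X - Y) * W) = (1 - Y / X) * (W / 2) := by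
  field_simp

lemma const_div_aux (q w P r m1 : ℝ) (hP : P ≠ 0) (hm : m1 ≠ 0) :
    q * w / P * r / m1 = q * (w / (P * m1)) * r := by
  field_simp


lemma vle_aux (m : ℕ) : 2 * π * (m:ℝ) + 3 * π / 4 ≤ (2*π + 3*π/4) * ((m:ℝ) + 1) := by
  nlinarith [pi_pos, (Nat.cast_nonneg m : (0:ℝ) ≤ m)]

lemma hnum_aux {α VR : ℝ} (hα : 0 < α) (hVR : 0 < VR) {d : ℕ} (hd : 1 ≤ d)
    {um vm am bm m1 : ℝ}
    (hu_pos : 0 < um) (hv_pos : 0 < vm) (huv : um ≤ vm) (hvu : vm - um = π / 2)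
    (hm1 : 0 < m1) (hvle : vm ≤ (2*π + 3*π/4) * m1)
    (ha_pos : 0 < am) (hb_pos : 0 < bm) (hab : am ≤ bm)
    (hratio : am / bm = (um / vm) ^ (α⁻¹)) :
    min 1 α⁻¹ * (π/2) / (2*π + 3*π/4) * (VR/2) / m1 ≤
      (bm ^ d)⁻¹ * (1/2) * ((bm ^ d - am ^ d) * VR) := by
  have hπ := pi_pos
  have hbd : (0:ℝ) < bm ^ d := pow_pos hb_pos d
  have huv1 : um / vm ≤ 1 := div_le_one_of_le₀ huv hv_pos.le
  have huv0 : 0 < um / vm := div_pos hu_pos hv_pos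
  have hstep1 : (am / bm) ^ d ≤ am / bm := by
    have h1 : (0:ℝ) ≤ am / bm := by positivity
    have h2 : am / bm ≤ 1 := (div_le_one hb_pos).mpr hab
    calc (am / bm) ^ d ≤ (am / bm) ^ 1 := pow_le_pow_of_le_one h1 h2 hd
      _ = am / bm := pow_one _
  have hstep2 : min 1 α⁻¹ * (1 - um / vm) ≤ 1 - (um / vm) ^ (α⁻¹) :=
    bernoulli_aux huv0 huv1 (inv_pos.mpr hα)
  have hveq : 1 - um / vm = (π/2) / vm := by
    rw [one_sub_div hv_pos.ne', hvu]
  have hstep3 : (π/2) / ((2*π + 3*π/4) * m1) ≤ 1 - um / vm := by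
    rw [hveq]
    exact div_le_div_of_nonneg_left (by positivity) hv_pos hvle
  have hchain : min 1 α⁻¹ * ((π/2) / ((2*π + 3*π/4) * m1)) ≤ 1 - (am / bm) ^ d := by
    calc min 1 α⁻¹ * ((π/2) / ((2*π + 3*π/4) * m1))
        ≤ min 1 α⁻¹ * (1 - um / vm) := by
          apply mul_le_mul_of_nonneg_left hstep3
          positivity
      _ ≤ 1 - (um / vm) ^ (α⁻¹) := hstep2
      _ = 1 - am / bm := by rw [hratio]
      _ ≤ 1 - (am / bm) ^ d := by linarith
  have heq1 : (bm ^ d)⁻¹ * (1/2) * ((bm ^ d - am ^ d) * VR)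
      = (1 - (am / bm) ^ d) * (VR / 2) := by
    rw [div_pow, annulus_aux _ _ _ hbd.ne']
  have heq2 : min 1 α⁻¹ * (π/2) / (2*π + 3*π/4) * (VR/2) / m1 =
      min 1 α⁻¹ * ((π/2) / ((2*π + 3*π/4) * m1)) * (VR/2) :=
    const_div_aux _ _ _ _ _ (by positivity) hm1.ne'
  rw [heq1, heq2]
  apply mul_le_mul_of_nonneg_right hchain (by positivity)

/-- If `|α−1| + β < 1` and `ε ∈ (2|α−1|, 1−β+|α−1|]`, then the integral over `ℝ^d` of
`(1−κ(|x|))³ · |x|^{1−β+|α−1|−(d+ε)} · sin²(k|x|^α)` is infinite. -/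
theorem integral_oscillating_infinite
    (d : ℕ) (hd : 1 ≤ d) (α β : ℝ) (hα : 0 < α) (hβ : 0 < β)
    (hαβ : |α - 1| + β < 1)
    (ε : ℝ) (hε1 : 2 * |α - 1| < ε) (hε2 : ε ≤ 1 - β + |α - 1|)
    (κ : ℝ → ℝ) (hκsmooth : ContDiff ℝ (⊤ : ℕ∞) κ) (hκsupp : HasCompactSupport κ)
    (hκone : ∀ t ∈ Set.Icc (-1 : ℝ) 1, κ t = 1)
    (hκrange : ∀ t, 0 ≤ κ t ∧ κ t ≤ 1)
    (k : ℝ) (hk : 0 < k) :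
    ∫⁻ x : EuclideanSpace ℝ (Fin d),
        ENNReal.ofReal ((1 - κ ‖x‖) ^ 3 * ‖x‖ ^ (1 - β + |α - 1| - ((d : ℝ) + ε))
          * Real.sin (k * ‖x‖ ^ α) ^ 2) = ⊤ := by
  have hπ := Real.pi_pos
  set E := EuclideanSpace ℝ (Fin d)
  set e : ℝ := 1 - β + |α - 1| - ((d : ℝ) + ε) with he_def
  have he : -(d:ℝ) ≤ e := by rw [he_def]; linarith
  -- κ vanishes beyond M
  obtain ⟨R₀, hR₀⟩ := hκsupp.isBounded.subset_closedBall (0:ℝ)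
  set M : ℝ := max R₀ 0 + 1 with hM_def
  have hM1 : (1:ℝ) ≤ M := by
    have := le_max_right R₀ 0
    rw [hM_def]; linarith
  have hκ0 : ∀ t : ℝ, M ≤ t → κ t = 0 := by
    intro t ht
    apply image_eq_zero_of_notMem_tsupport
    intro hmem
    have h1 : |t| ≤ R₀ := by simpa [Real.closedBall_eq_Icc, abs_le] using hR₀ hmem
    have h2 : t ≤ |t| := le_abs_self t
    have : R₀ ≤ max R₀ 0 := le_max_left _ _
    linarith
  -- index threshold
  set N : ℕ := ⌈k * M ^ α / (2 * π)⌉₊ with hN_def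
  have hN : ∀ m : ℕ, N ≤ m → k * M ^ α ≤ 2 * π * m + π / 4 := by
    intro m hm
    have h1 : k * M ^ α / (2 * π) ≤ (N : ℝ) := Nat.le_ceil _
    have h2 : (N : ℝ) ≤ m := by exact_mod_cast hm
    have h3 : k * M ^ α ≤ 2 * π * N := by
      rw [div_le_iff₀ (by positivity)] at h1; linarith
    have h4 : 2 * π * (N:ℝ) ≤ 2 * π * m := by nlinarith
    linarith
  -- radii
  set u : ℕ → ℝ := fun n => 2 * π * n + π / 4 with hu_def
  set v : ℕ → ℝ := fun n => 2 * π * n + 3 * π / 4 with hv_def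
  set a : ℕ → ℝ := fun n => (u n / k) ^ (α⁻¹) with ha_def
  set b : ℕ → ℝ := fun n => (v n / k) ^ (α⁻¹) with hb_def
  have hu_pos : ∀ n, 0 < u n := fun n => by
    have : (0:ℝ) ≤ n := Nat.cast_nonneg n
    simp only [hu_def]; nlinarith
  have hv_pos : ∀ n, 0 < v n := fun n => by
    have : (0:ℝ) ≤ n := Nat.cast_nonneg n
    simp only [hv_def]; nlinarith
  have huv : ∀ n, u n ≤ v n := fun n => by simp only [hu_def, hv_def]; linarith
  have ha_pos : ∀ n, 0 < a n := fun n =>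
    Real.rpow_pos_of_pos (div_pos (hu_pos n) hk) _
  have hb_pos : ∀ n, 0 < b n := fun n =>
    Real.rpow_pos_of_pos (div_pos (hv_pos n) hk) _
  have hab : ∀ n, a n ≤ b n := fun n =>
    Real.rpow_le_rpow (by positivity) (by gcongr; exact huv n) (by positivity)
  have hka : ∀ n, k * a n ^ α = u n := by
    intro n
    have h1 : a n ^ α = u n / k := Real.rpow_inv_rpow (by positivity) hα.ne'
    rw [h1]; field_simp
  have hkb : ∀ n, k * b n ^ α = v n := by
    intro n
    have h1 : b n ^ α = v n / k := Real.rpow_inv_rpow (by positivity) hα.ne'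
    rw [h1]; field_simp
  have haM : ∀ m, N ≤ m → M ≤ a m := by
    intro m hm
    have h1 : M ^ α ≤ u m / k := by
      rw [le_div_iff₀ hk]
      have := hN m hm
      simp only [hu_def]; linarith
    calc M = (M ^ α) ^ α⁻¹ := (Real.rpow_rpow_inv (by positivity) hα.ne').symm
      _ ≤ (u m / k) ^ α⁻¹ := Real.rpow_le_rpow (by positivity) h1 (by positivity)
  have hbu : ∀ m m', m < m' → b m ≤ a m' := by
    intro m m' hmm'
    have h1 : (m:ℝ) + 1 ≤ m' := by exact_mod_cast hmm'
    have h2 : v m ≤ u m' := by simp only [hu_def, hv_def]; nlinarith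
    exact Real.rpow_le_rpow (by positivity) (by gcongr) (by positivity)
  -- annuli
  set A : ℕ → Set E := fun n => ball 0 (b (n + N)) \ ball 0 (a (n + N)) with hA_def
  have hAmeas : ∀ n, MeasurableSet (A n) := fun n =>
    measurableSet_ball.diff measurableSet_ball
  have key_disj : ∀ i j, i < j → Disjoint (A i) (A j) := by
    intro i j hij
    refine Set.disjoint_left.mpr fun x hxi hxj => ?_
    have h1 : ‖x‖ < b (i + N) := by
      have := hxi.1; rwa [mem_ball_zero_iff] at this
    have h2 : a (j + N) ≤ ‖x‖ := by
      have := hxj.2; rw [mem_ball_zero_iff] at this; linarith [not_lt.mp this]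
    have := hbu (i + N) (j + N) (by omega)
    linarith
  have hAdisj : Pairwise (Function.onFun Disjoint A) := by
    intro i j hij
    rcases hij.lt_or_gt with h | h
    · exact key_disj i j h
    · exact (key_disj j i h).symm
  -- volume facts
  set V : ℝ≥0∞ := volume (ball (0:E) 1) with hV_def
  have hVlt : V < ⊤ := measure_ball_lt_top
  have hVpos : 0 < V := measure_ball_pos _ _ one_pos
  set VR : ℝ := V.toReal with hVR_def
  have hVR : 0 < VR := ENNReal.toReal_pos hVpos.ne' hVlt.ne
  have hball : ∀ r : ℝ, 0 < r → volume (ball (0:E) r) = ENNReal.ofReal (r ^ d) * V := by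
    intro r hr
    rw [Measure.addHaar_ball_of_pos _ _ hr]
    congr 2
    simp [E, finrank_euclideanSpace_fin]
  have hμA : ∀ n, volume (A n) =
      ENNReal.ofReal ((b (n + N) ^ d - a (n + N) ^ d) * VR) := by
    intro n
    rw [hA_def]
    rw [measure_diff (ball_subset_ball (hab _)) measurableSet_ball.nullMeasurableSet
      measure_ball_lt_top.ne]
    rw [hball _ (hb_pos _), hball _ (ha_pos _)]
    rw [show V = ENNReal.ofReal VR from (ENNReal.ofReal_toReal hVlt.ne).symm]
    rw [← ENNReal.ofReal_mul (by positivity), ← ENNReal.ofReal_mul (by positivity),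
      ← ENNReal.ofReal_sub _ (by positivity)]
    congr 1; ring
  -- pointwise bound
  have hpoint : ∀ n, ∀ x ∈ A n,
      ENNReal.ofReal ((b (n + N) ^ d)⁻¹ * (1/2)) ≤
      ENNReal.ofReal ((1 - κ ‖x‖) ^ 3 * ‖x‖ ^ e * Real.sin (k * ‖x‖ ^ α) ^ 2) := by
    intro n x hx
    set m := n + N with hm_def
    have haX : a m ≤ ‖x‖ := by
      have := hx.2; rw [mem_ball_zero_iff] at this; linarith [not_lt.mp this]
    have hbX : ‖x‖ ≤ b m := by
      have := hx.1; rw [mem_ball_zero_iff] at this; linarith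
    have hMx : M ≤ ‖x‖ := le_trans (haM m (Nat.le_add_left _ _)) haX
    have h1x : (1:ℝ) ≤ ‖x‖ := le_trans hM1 hMx
    have hx_pos : (0:ℝ) < ‖x‖ := lt_of_lt_of_le one_pos h1x
    have hκx : κ ‖x‖ = 0 := hκ0 _ hMx
    have hsin : (1:ℝ)/2 ≤ Real.sin (k * ‖x‖ ^ α) ^ 2 := by
      apply sin_sq_half m
      · rw [show 2 * π * (m:ℝ) + π / 4 = u m from rfl, ← hka m]
        exact mul_le_mul_of_nonneg_left
          (Real.rpow_le_rpow (ha_pos m).le haX hα.le) hk.le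
      · rw [show 2 * π * (m:ℝ) + 3 * π / 4 = v m from rfl, ← hkb m]
        exact mul_le_mul_of_nonneg_left
          (Real.rpow_le_rpow (norm_nonneg x) hbX hα.le) hk.le
    have hr : (b m ^ d)⁻¹ ≤ ‖x‖ ^ e := by
      have step1 : (b m ^ d)⁻¹ ≤ (‖x‖ ^ d)⁻¹ := by
        gcongr
        all_goals first | exact hx_pos.le | exact hbX
      have step2 : (‖x‖ ^ d)⁻¹ = ‖x‖ ^ (-(d:ℝ)) := by
        rw [Real.rpow_neg (norm_nonneg x), Real.rpow_natCast]
      have step3 : ‖x‖ ^ (-(d:ℝ)) ≤ ‖x‖ ^ e :=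
        Real.rpow_le_rpow_of_exponent_le h1x he
      calc (b m ^ d)⁻¹ ≤ (‖x‖ ^ d)⁻¹ := step1
        _ = ‖x‖ ^ (-(d:ℝ)) := step2
        _ ≤ ‖x‖ ^ e := step3
    apply ENNReal.ofReal_le_ofReal
    rw [hκx]
    have h2 : ((1:ℝ) - 0) ^ 3 = 1 := by norm_num
    rw [h2, one_mul]
    have := mul_le_mul hr hsin (by norm_num) (Real.rpow_nonneg (norm_nonneg x) e)
    linarith
  -- the constant
  set C : ℝ := (min 1 α⁻¹ * (π/2) / (2*π + 3*π/4)) * (VR/2) with hC_def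
  have hCpos : 0 < C := by
    apply mul_pos _ (by positivity)
    apply div_pos _ (by positivity)
    exact mul_pos (lt_min one_pos (inv_pos.mpr hα)) (by positivity)
  -- the numeric inequality
  have hnum : ∀ m : ℕ, C / ((m:ℝ) + 1) ≤
      (b m ^ d)⁻¹ * (1/2) * ((b m ^ d - a m ^ d) * VR) := by
    intro m
    have hratio : a m / b m = (u m / v m) ^ (α⁻¹) := by
      rw [ha_def, hb_def]
      simp only
      rw [← Real.div_rpow (by positivity) (by positivity)]
      congr 1
      field_simp
    have hvu : v m - u m = π / 2 := by simp only [hu_def, hv_def]; ring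
    have hvle : v m ≤ (2*π + 3*π/4) * ((m:ℝ) + 1) := by
      simp only [hv_def]; exact vle_aux m
    have h := hnum_aux hα hVR hd (hu_pos m) (hv_pos m) (huv m) hvu
      (by positivity) hvle (ha_pos m) (hb_pos m) (hab m) hratio
    rw [hC_def]
    exact h
  -- per-term bound
  have hterm : ∀ n : ℕ, ENNReal.ofReal (C / ((n:ℝ) + N + 1)) ≤
      ∫⁻ x in A n, ENNReal.ofReal ((1 - κ ‖x‖) ^ 3 * ‖x‖ ^ e
        * Real.sin (k * ‖x‖ ^ α) ^ 2) := by
    intro n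
    have hcast : ((n + N : ℕ) : ℝ) = (n:ℝ) + N := by push_cast; ring
    calc ENNReal.ofReal (C / ((n:ℝ) + N + 1))
        ≤ ENNReal.ofReal ((b (n+N) ^ d)⁻¹ * (1/2) * ((b (n+N) ^ d - a (n+N) ^ d) * VR)) := by
          apply ENNReal.ofReal_le_ofReal
          have := hnum (n + N)
          rwa [hcast] at this
      _ = ENNReal.ofReal ((b (n+N) ^ d)⁻¹ * (1/2)) * volume (A n) := by
          rw [hμA n, ← ENNReal.ofReal_mul (by positivity)]
      _ = ∫⁻ _x in A n, ENNReal.ofReal ((b (n+N) ^ d)⁻¹ * (1/2)) := by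
          rw [setLIntegral_const]
      _ ≤ ∫⁻ x in A n, ENNReal.ofReal ((1 - κ ‖x‖) ^ 3 * ‖x‖ ^ e
            * Real.sin (k * ‖x‖ ^ α) ^ 2) :=
          setLIntegral_mono' (hAmeas n) (hpoint n)
  -- assemble
  have final : (⊤:ℝ≥0∞) ≤ ∫⁻ x : E,
      ENNReal.ofReal ((1 - κ ‖x‖) ^ 3 * ‖x‖ ^ e * Real.sin (k * ‖x‖ ^ α) ^ 2) := by
    calc (⊤:ℝ≥0∞) = ∑' n : ℕ, ENNReal.ofReal (C / ((n:ℝ) + N + 1)) :=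
          (harmonic_top C hCpos N).symm
      _ ≤ ∑' n : ℕ, ∫⁻ x in A n, ENNReal.ofReal ((1 - κ ‖x‖) ^ 3 * ‖x‖ ^ e
            * Real.sin (k * ‖x‖ ^ α) ^ 2) := ENNReal.tsum_le_tsum hterm
      _ = ∫⁻ x in ⋃ n, A n, ENNReal.ofReal ((1 - κ ‖x‖) ^ 3 * ‖x‖ ^ e
            * Real.sin (k * ‖x‖ ^ α) ^ 2) := (lintegral_iUnion hAmeas hAdisj _).symm
      _ ≤ _ := setLIntegral_le_lintegral _ _
  exact top_le_iff.mp final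
end

section
/- Let α > 1, δ ∈ (0, 1/2), and x, y ∈ ℝ^d with x ≠ 0 and |x−y| ≤ (1−δ)|x|. Define w_α(x,y) = α ∫_0^1 |t·x+(1−t)·y|^{α−2} (t·x+(1−t)·y) dt. Then (1/2)·δ^{α−1} ≤ α^{−1} |x|^{1−α} |w_α(x,y)| ≤ (2−δ)^{α−1}. -/
/-!
Write `z t = t • x + (1 - t) • y`. Since `x - z t = (1 - t) • (x - y)`, the point `z t` lies in the
ball of radius `ρ = (1 - t)(1 - δ) ≤ 1 - δ` about `x`, so `(1 - ρ)‖x‖ ≤ ‖z t‖ ≤ (2 - δ)‖x‖`. The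
upper bound follows by bounding the norm `‖z t‖ ^ (α - 1)` of the integrand. For the lower bound,
the ball condition keeps `z t` in a cone around `x`: `⟪x, z t⟫ ≥ (1 - ρ)‖x‖‖z t‖`, hence
`⟪x, ‖z t‖ ^ (α - 2) • z t⟫ ≥ ((1 - ρ)‖x‖) ^ α ≥ t δ ^ (α - 1) ‖x‖ ^ α`. Integrating in `t` and
using `⟪x, w⟫ ≤ ‖x‖‖w‖` gives the factor `1 / 2`.
-/

open MeasureTheory Set
open scoped RealInnerProductSpace

lemma Real.rpow_sub_one_mul_self {x y : ℝ} (hx : 0 ≤ x) (hy : y ≠ 0) :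
    x ^ (y - 1) * x = x ^ y := by
  rw [← Real.rpow_add_one' hx (by simpa using hy), sub_add_cancel]

section NormedGroup

variable {F : Type*} [SeminormedAddCommGroup F]

lemma le_norm_of_norm_sub_le {x z : F} {ρ : ℝ} (h : ‖x - z‖ ≤ ρ * ‖x‖) :
    (1 - ρ) * ‖x‖ ≤ ‖z‖ := by
  linarith [norm_sub_norm_le x z]

lemma norm_le_of_norm_sub_le {x z : F} {ρ : ℝ} (h : ‖x - z‖ ≤ ρ * ‖x‖) :
    ‖z‖ ≤ (1 + ρ) * ‖x‖ := by
  linarith [norm_sub_norm_le z x, norm_sub_rev x z]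

end NormedGroup

section NormedSpace

variable {F : Type*} [NormedAddCommGroup F] [NormedSpace ℝ F] {x y : F} {α δ t : ℝ}

lemma norm_rpow_sub_two_smul_self (hα : α ≠ 1) (v : F) :
    ‖‖v‖ ^ (α - 2) • v‖ = ‖v‖ ^ (α - 1) := by
  rw [norm_smul, Real.norm_of_nonneg (by positivity), show α - 2 = α - 1 - 1 by ring,
    Real.rpow_sub_one_mul_self (norm_nonneg v) (sub_ne_zero.2 hα)]

lemma norm_sub_smul_add_one_sub_smul_le (ht : t ≤ 1)
    (hxy : ‖x - y‖ ≤ (1 - δ) * ‖x‖) :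
    ‖x - (t • x + (1 - t) • y)‖ ≤ (1 - t) * (1 - δ) * ‖x‖ := by
  rw [show x - (t • x + (1 - t) • y) = (1 - t) • (x - y) by module, norm_smul,
    Real.norm_of_nonneg (sub_nonneg.2 ht), mul_assoc]
  exact mul_le_mul_of_nonneg_left hxy (sub_nonneg.2 ht)

lemma smul_add_one_sub_smul_ne_zero (hx : x ≠ 0) (hδ0 : 0 < δ)
    (hxy : ‖x - y‖ ≤ (1 - δ) * ‖x‖) (ht : t ∈ Icc (0 : ℝ) 1) :
    t • x + (1 - t) • y ≠ 0 := by
  have hz := le_norm_of_norm_sub_le (norm_sub_smul_add_one_sub_smul_le ht.2 hxy)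
  have hm : 0 < 1 - (1 - t) * (1 - δ) := by
    rcases le_total δ 1 with hδ1 | hδ1
    · nlinarith [mul_nonneg ht.1 (sub_nonneg.2 hδ1)]
    · nlinarith [mul_nonneg (sub_nonneg.2 ht.2) (sub_nonneg.2 hδ1)]
  exact norm_pos_iff.1 (lt_of_lt_of_le (mul_pos hm (norm_pos_iff.2 hx)) hz)

lemma intervalIntegrable_rpow_sub_two_smul (α : ℝ) (hx : x ≠ 0) (hδ0 : 0 < δ)
    (hxy : ‖x - y‖ ≤ (1 - δ) * ‖x‖) :
    IntervalIntegrable (fun t : ℝ => ‖t • x + (1 - t) • y‖ ^ (α - 2) • (t • x + (1 - t) • y))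
      volume 0 1 := by
  apply ContinuousOn.intervalIntegrable
  rw [uIcc_of_le zero_le_one]
  have hz : Continuous fun t : ℝ => t • x + (1 - t) • y := by fun_prop
  exact (hz.norm.continuousOn.rpow_const fun t ht =>
    Or.inl (norm_ne_zero_iff.2 (smul_add_one_sub_smul_ne_zero hx hδ0 hxy ht))).smul
    hz.continuousOn

lemma norm_rpow_sub_two_smul_le (hα : 1 < α) (hδ1 : δ ≤ 1)
    (hxy : ‖x - y‖ ≤ (1 - δ) * ‖x‖) (ht : t ∈ Icc (0 : ℝ) 1) :
    ‖‖t • x + (1 - t) • y‖ ^ (α - 2) • (t • x + (1 - t) • y)‖ ≤ ((2 - δ) * ‖x‖) ^ (α - 1) := by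
  rw [norm_rpow_sub_two_smul_self hα.ne']
  have hz := norm_le_of_norm_sub_le (norm_sub_smul_add_one_sub_smul_le ht.2 hxy)
  gcongr
  nlinarith [mul_nonneg (mul_nonneg ht.1 (sub_nonneg.2 hδ1)) (norm_nonneg x)]

end NormedSpace

section InnerProductSpace

variable {E : Type*} [NormedAddCommGroup E] [InnerProductSpace ℝ E] {x y : E} {α δ t : ℝ}

/-- `2⟪x, z⟫ - 2(1 - ρ)‖x‖‖z‖ ≥ (‖z‖ - (1 - ρ)‖x‖)² + 2ρ(1 - ρ)‖x‖²` by the polarization identity. -/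
lemma one_sub_mul_norm_mul_norm_le_inner {z : E} {ρ : ℝ} (hρ0 : 0 ≤ ρ) (hρ1 : ρ ≤ 1)
    (h : ‖x - z‖ ≤ ρ * ‖x‖) : (1 - ρ) * ‖x‖ * ‖z‖ ≤ ⟪x, z⟫ := by
  have hsq : ‖x - z‖ ^ 2 ≤ (ρ * ‖x‖) ^ 2 := pow_le_pow_left₀ (norm_nonneg _) h 2
  rw [norm_sub_sq_real] at hsq
  nlinarith [sq_nonneg (‖z‖ - (1 - ρ) * ‖x‖),
    mul_nonneg (mul_nonneg hρ0 (sub_nonneg.2 hρ1)) (sq_nonneg ‖x‖)]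

lemma rpow_le_inner_rpow_sub_two_smul {z : E} {ρ : ℝ} (hα : 1 < α) (hρ0 : 0 ≤ ρ)
    (hρ1 : ρ ≤ 1) (h : ‖x - z‖ ≤ ρ * ‖x‖) :
    ((1 - ρ) * ‖x‖) ^ α ≤ ⟪x, ‖z‖ ^ (α - 2) • z⟫ := by
  set r := (1 - ρ) * ‖x‖
  have hr : 0 ≤ r := mul_nonneg (sub_nonneg.2 hρ1) (norm_nonneg x)
  have hrz : r ≤ ‖z‖ := le_norm_of_norm_sub_le h
  rw [show α - 2 = α - 1 - 1 by ring]
  calc r ^ α = r ^ (α - 1) * r := (Real.rpow_sub_one_mul_self hr (by positivity)).symm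
    _ ≤ ‖z‖ ^ (α - 1) * r := by gcongr
    _ = ‖z‖ ^ (α - 1 - 1) * (r * ‖z‖) := by
        rw [← Real.rpow_sub_one_mul_self (y := α - 1) (norm_nonneg z) (by linarith)]; ring
    _ ≤ ‖z‖ ^ (α - 1 - 1) * ⟪x, z⟫ := by
        gcongr; exact one_sub_mul_norm_mul_norm_le_inner hρ0 hρ1 h
    _ = ⟪x, ‖z‖ ^ (α - 1 - 1) • z⟫ := (real_inner_smul_right _ _ _).symm

lemma integral_le_inner_integral [CompleteSpace E] {f : ℝ → E} {g : ℝ → ℝ} {a b : ℝ}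
    (x : E) (hab : a ≤ b) (hf : IntervalIntegrable f volume a b)
    (hg : IntervalIntegrable g volume a b) (h : ∀ t ∈ Icc a b, g t ≤ ⟪x, f t⟫) :
    ∫ t in a..b, g t ≤ ⟪x, ∫ t in a..b, f t⟫ := by
  rw [← innerSL_apply_apply ℝ, ← (innerSL ℝ x).intervalIntegral_comp_comm hf]
  exact intervalIntegral.integral_mono_on hab hg ⟨hf.1.const_inner x, hf.2.const_inner x⟩ h

lemma rpow_mul_le_inner_rpow_sub_two_smul (hα : 1 < α) (hδ0 : 0 ≤ δ) (hδ1 : δ ≤ 1)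
    (hxy : ‖x - y‖ ≤ (1 - δ) * ‖x‖) (ht : t ∈ Icc (0 : ℝ) 1) :
    δ ^ (α - 1) * ‖x‖ ^ α * t ≤ ⟪x, ‖t • x + (1 - t) • y‖ ^ (α - 2) • (t • x + (1 - t) • y)⟫ := by
  have hρ0 : 0 ≤ (1 - t) * (1 - δ) := mul_nonneg (by linarith [ht.2]) (by linarith)
  have hρ1 : (1 - t) * (1 - δ) ≤ 1 := by nlinarith [ht.1, ht.2]
  refine le_trans ?_ (rpow_le_inner_rpow_sub_two_smul hα hρ0 hρ1
    (norm_sub_smul_add_one_sub_smul_le ht.2 hxy))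
  set m := 1 - (1 - t) * (1 - δ)
  have hδm : δ ≤ m := by nlinarith [ht.1]
  have htm : t ≤ m := by nlinarith [ht.2]
  calc δ ^ (α - 1) * ‖x‖ ^ α * t ≤ m ^ (α - 1) * ‖x‖ ^ α * m := by gcongr; linarith [ht.1]
    _ = (m * ‖x‖) ^ α := by
        rw [mul_right_comm, Real.rpow_sub_one_mul_self (by linarith) (by positivity),
          Real.mul_rpow (by linarith) (norm_nonneg x)]

end InnerProductSpace

/-- For `α > 1`, `δ ∈ (0,1/2)`, `x ≠ 0` and `|x−y| ≤ (1−δ)|x|`, with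
`w_α(x,y) = α ∫_0^1 |t·x+(1−t)·y|^{α−2} (t·x+(1−t)·y) dt`, one has
`(1/2)·δ^{α−1} ≤ α⁻¹ |x|^{1−α} |w_α(x,y)| ≤ (2−δ)^{α−1}`. -/
theorem oscillation_phase_gradient_bounds
    (d : ℕ) (α δ : ℝ) (hα : 1 < α) (hδ0 : 0 < δ) (hδ : δ < 1 / 2)
    (x y : EuclideanSpace ℝ (Fin d)) (hx : x ≠ 0) (hxy : ‖x - y‖ ≤ (1 - δ) * ‖x‖)
    (w : EuclideanSpace ℝ (Fin d))
    (hw : w = α • ∫ t in (0 : ℝ)..1,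
        (‖t • x + (1 - t) • y‖ ^ (α - 2)) • (t • x + (1 - t) • y)) :
    (1 / 2) * δ ^ (α - 1) ≤ α⁻¹ * ‖x‖ ^ (1 - α) * ‖w‖ ∧
      α⁻¹ * ‖x‖ ^ (1 - α) * ‖w‖ ≤ (2 - δ) ^ (α - 1) := by
  set I := ∫ t in (0 : ℝ)..1, ‖t • x + (1 - t) • y‖ ^ (α - 2) • (t • x + (1 - t) • y)
  have hX : 0 < ‖x‖ := norm_pos_iff.2 hx
  have hδ1 : δ ≤ 1 := by linarith
  have hXα : 0 < ‖x‖ ^ (α - 1) := by positivity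
  have hupper : ‖I‖ ≤ (2 - δ) ^ (α - 1) * ‖x‖ ^ (α - 1) := by
    rw [← Real.mul_rpow (by linarith) hX.le]
    have h := intervalIntegral.norm_integral_le_of_norm_le_const (a := 0) (b := 1) fun t ht =>
      norm_rpow_sub_two_smul_le hα hδ1 hxy
        (Ioc_subset_Icc_self (by rwa [uIoc_of_le zero_le_one] at ht))
    rwa [sub_zero, abs_one, mul_one] at h
  have hlower : ‖x‖ * (δ ^ (α - 1) * ‖x‖ ^ (α - 1) / 2) ≤ ‖x‖ * ‖I‖ := by
    have h := integral_le_inner_integral x zero_le_one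
      (intervalIntegrable_rpow_sub_two_smul α hx hδ0 hxy)
      (Continuous.intervalIntegrable (by fun_prop) _ _)
      fun t ht => rpow_mul_le_inner_rpow_sub_two_smul hα hδ0.le hδ1 hxy ht
    rw [intervalIntegral.integral_const_mul, integral_id] at h
    calc _ = δ ^ (α - 1) * ‖x‖ ^ α * ((1 ^ 2 - 0 ^ 2) / 2) := by
          rw [← Real.rpow_sub_one_mul_self (y := α) hX.le (by positivity)]; ring
      _ ≤ ⟪x, I⟫ := h
      _ ≤ ‖x‖ * ‖I‖ := real_inner_le_norm x I
  have hw' : α⁻¹ * ‖x‖ ^ (1 - α) * ‖w‖ = ‖I‖ / ‖x‖ ^ (α - 1) := by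
    rw [hw, norm_smul, Real.norm_of_nonneg (by linarith), show 1 - α = -(α - 1) by ring,
      Real.rpow_neg hX.le]
    field_simp
  rw [hw', le_div_iff₀ hXα, div_le_iff₀ hXα]
  exact ⟨by linarith [le_of_mul_le_mul_left hlower hX], hupper⟩
end

section
/- Let α, β > 0 with ε := α + β − 2 > 0 and β ≤ 1, k > 0, w ∈ ℝ. Let κ, κ̃ : ℝ → ℝ be smooth compactly supported with κ = 1 on [−1,1], κ̃ = 1 on [−1/2,1/2], supp κ̃ ⊂ [−1,1]. Define W_{αβ}(x) = w(1−κ(|x|))|x|^{−β} sin(k|x|^α) and V̌_{sr}(x) = −(1−κ(|x|))|x|^{−1−ε} cos(k|x|^α). Then the function x ↦ w(1−κ̃(|x|))|x|^{−1} x·∇V̌_{sr}(x) − kα W_{αβ}(x) is a 'short-range' function: it is continuous away from 0, vanishes near 0, and satisfies sup_x ⟨x⟩^{1+ρ}|·| < ∞ for some ρ ∈ (0,1]. -/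
/-- For `α + β > 2`, `β ≤ 1`, the difference between
`w(1−κ̃(|x|))|x|^{−1} x·∇V̌_{sr}(x)` and `kα W_{αβ}(x)` is a short-range function:
continuous away from `0`, vanishing near `0`, and `O(⟨x⟩^{−1−ρ})` for some `ρ ∈ (0,1]`. -/
theorem oscillating_potential_divergence_form
    (d : ℕ) (α β k w : ℝ) (hα : 0 < α) (hβ : 0 < β) (hβ1 : β ≤ 1)
    (ε : ℝ) (hε : ε = α + β - 2) (hεpos : 0 < ε) (hk : 0 < k)
    (κ κt : ℝ → ℝ)
    (hκ : ContDiff ℝ (⊤ : ℕ∞) κ) (hκsupp : HasCompactSupport κ)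
    (hκone : ∀ t ∈ Set.Icc (-1 : ℝ) 1, κ t = 1)
    (hκt : ContDiff ℝ (⊤ : ℕ∞) κt) (hκtsupp : HasCompactSupport κt)
    (hκtone : ∀ t ∈ Set.Icc (-(1 : ℝ) / 2) (1 / 2), κt t = 1)
    (hκtsupp' : Function.support κt ⊆ Set.Icc (-1 : ℝ) 1)
    (W Vc R : EuclideanSpace ℝ (Fin d) → ℝ)
    (hW : ∀ x, W x = w * (1 - κ ‖x‖) * ‖x‖ ^ (-β) * Real.sin (k * ‖x‖ ^ α))
    (hVc : ∀ x, Vc x = -((1 - κ ‖x‖) * ‖x‖ ^ (-1 - ε) * Real.cos (k * ‖x‖ ^ α)))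
    (hR : ∀ x, R x = w * (1 - κt ‖x‖) * ‖x‖⁻¹ * (fderiv ℝ Vc x x) - k * α * W x) :
    ∃ ρ : ℝ, 0 < ρ ∧ ρ ≤ 1 ∧
      ContinuousOn R {x : EuclideanSpace ℝ (Fin d) | x ≠ 0} ∧
      (∃ η > (0 : ℝ), ∀ x : EuclideanSpace ℝ (Fin d), ‖x‖ < η → R x = 0) ∧
      ∃ M : ℝ, ∀ x : EuclideanSpace ℝ (Fin d),
        (Real.sqrt (1 + ‖x‖ ^ 2)) ^ (1 + ρ) * |R x| ≤ M := by
  obtain ⟨Ct, hCt⟩ : ∃ C, ∀ t, ‖κt t‖ ≤ C :=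
    hκtsupp.exists_bound_of_continuous hκt.continuous
  obtain ⟨Cd, hCd⟩ : ∃ C, ∀ t, ‖deriv κ t‖ ≤ C :=
    hκsupp.deriv.exists_bound_of_continuous (hκ.continuous_deriv (by simp))
  obtain ⟨Cκ, hCκ⟩ : ∃ C, ∀ t, ‖κ t‖ ≤ C :=
    hκsupp.exists_bound_of_continuous hκ.continuous
  have hCt0 : 0 ≤ Ct := le_trans (norm_nonneg _) (hCt 0)
  have hCd0 : 0 ≤ Cd := le_trans (norm_nonneg _) (hCd 0)
  have hCκ0 : 0 ≤ Cκ := le_trans (norm_nonneg _) (hCκ 0)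
  set ρ : ℝ := min ε 1 with hρdef
  have hρpos : 0 < ρ := lt_min hεpos one_pos
  have hρ1 : ρ ≤ 1 := min_le_right _ _
  have hρε : ρ ≤ ε := min_le_left _ _
  set G : ℝ → ℝ := fun r => w * (1 - κt r) *
      (deriv κ r * (r ^ (-1 - ε) * Real.cos (k * r ^ α)) +
        (1 + ε) * ((1 - κ r) * (r ^ (-2 - ε) * Real.cos (k * r ^ α)))) with hG
  have hGdef : ∀ r : ℝ, G r = w * (1 - κt r) *
      (deriv κ r * (r ^ (-1 - ε) * Real.cos (k * r ^ α)) +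
        (1 + ε) * ((1 - κ r) * (r ^ (-2 - ε) * Real.cos (k * r ^ α)))) := fun r => rfl
  have hκzero : ∀ r : ℝ, κt r * (1 - κ r) = 0 := by
    intro r
    rcases le_or_gt r 1 with h | h
    · rcases le_or_gt (-1 : ℝ) r with h' | h'
      · rw [hκone r ⟨h', h⟩]; ring
      · have : κt r = 0 := by
          by_contra hne
          exact absurd (hκtsupp' (Function.mem_support.mpr hne)).1 (not_le.mpr h')
        rw [this]; ring
    · have : κt r = 0 := by
        by_contra hne
        exact absurd (hκtsupp' (Function.mem_support.mpr hne)).2 (not_le.mpr h)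
      rw [this]; ring
  have hRG : ∀ x, R x = G ‖x‖ := by
    intro x
    rcases eq_or_ne x 0 with rfl | hx
    · have h1 : κt ‖(0 : EuclideanSpace ℝ (Fin d))‖ = 1 := by
        rw [norm_zero]; exact hκtone 0 ⟨by norm_num, by norm_num⟩
      have h2 : κ ‖(0 : EuclideanSpace ℝ (Fin d))‖ = 1 := by
        rw [norm_zero]; exact hκone 0 ⟨by norm_num, by norm_num⟩
      rw [hR, hW, hGdef, h1, h2]; ring
    · have hr : (0 : ℝ) < ‖x‖ := norm_pos_iff.mpr hx
      have hrne : ‖x‖ ≠ 0 := hr.ne'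
      -- scalar derivative
      have hκd : HasDerivAt κ (deriv κ ‖x‖) ‖x‖ :=
        (hκ.differentiable (by simp) ‖x‖).hasDerivAt
      have h1 : HasDerivAt (fun t : ℝ => 1 - κ t) (-(deriv κ ‖x‖)) ‖x‖ := by
        have := (hasDerivAt_const ‖x‖ (1 : ℝ)).sub hκd; rwa [zero_sub] at this
      have h2 : HasDerivAt (fun t : ℝ => t ^ (-1 - ε)) ((-1 - ε) * ‖x‖ ^ (-1 - ε - 1)) ‖x‖ :=
        Real.hasDerivAt_rpow_const (Or.inl hrne)
      have h3 : HasDerivAt (fun t : ℝ => Real.cos (k * t ^ α))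
          (-Real.sin (k * ‖x‖ ^ α) * (k * (α * ‖x‖ ^ (α - 1)))) ‖x‖ :=
        ((Real.hasDerivAt_rpow_const (Or.inl hrne)).const_mul k).cos
      have hre : ‖x‖ ^ (-1 - ε) * ‖x‖ ^ (α - 1) = ‖x‖ ^ (-β) := by
        rw [← Real.rpow_add hr]; congr 1; rw [hε]; ring
      have hre2 : ‖x‖ ^ (-1 - ε - 1 : ℝ) = ‖x‖ ^ (-2 - ε : ℝ) := by
        congr 1; ring
      set D : ℝ := deriv κ ‖x‖ * (‖x‖ ^ (-1 - ε) * Real.cos (k * ‖x‖ ^ α)) +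
          (1 + ε) * ((1 - κ ‖x‖) * (‖x‖ ^ (-2 - ε) * Real.cos (k * ‖x‖ ^ α))) +
          k * α * ((1 - κ ‖x‖) * (‖x‖ ^ (-β) * Real.sin (k * ‖x‖ ^ α))) with hD
      have hg : HasDerivAt (fun t : ℝ => -((1 - κ t) * t ^ (-1 - ε) * Real.cos (k * t ^ α)))
          D ‖x‖ := by
        convert ((h1.mul h2).mul h3).neg using 1
        case e'_4 => rfl
        case e'_5 => rfl
        case e'_8 => rfl
        simp only [Pi.mul_apply]
        rw [hD, hre2]
        linear_combination (-(k * α * ((1 - κ ‖x‖) * Real.sin (k * ‖x‖ ^ α)))) * hre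
      have hVcEq : Vc = fun y : EuclideanSpace ℝ (Fin d) =>
          -((1 - κ ‖y‖) * ‖y‖ ^ (-1 - ε) * Real.cos (k * ‖y‖ ^ α)) := funext hVc
      have hnd : DifferentiableAt ℝ (fun y : EuclideanSpace ℝ (Fin d) => ‖y‖) x :=
        ((contDiffAt_norm ℝ hx (n := 1)).differentiableAt one_ne_zero)
      have hcomp : HasFDerivAt Vc
          (D • (fderiv ℝ (fun y : EuclideanSpace ℝ (Fin d) => ‖y‖) x)) x := by
        rw [hVcEq]
        exact hg.comp_hasFDerivAt x hnd.hasFDerivAt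
      have hfd : fderiv ℝ Vc x x = D * ‖x‖ := by
        rw [hcomp.fderiv, ContinuousLinearMap.smul_apply, hnd.fderiv_norm_self, smul_eq_mul]
      have hfd2 : w * (1 - κt ‖x‖) * ‖x‖⁻¹ * fderiv ℝ Vc x x = w * (1 - κt ‖x‖) * D := by
        rw [hfd]; field_simp
      rw [hR, hW, hfd2, hD, hGdef]
      linear_combination (-(k * α * w * (‖x‖ ^ (-β)) * Real.sin (k * ‖x‖ ^ α))) * hκzero ‖x‖
  refine ⟨ρ, hρpos, hρ1, ?_, ⟨1/2, by norm_num, ?_⟩, ?_⟩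
  · -- continuity
    intro x hx
    have hr : (0 : ℝ) < ‖x‖ := norm_pos_iff.mpr hx
    have hrne : ‖x‖ ≠ 0 := hr.ne'
    have hRfun : R = fun y : EuclideanSpace ℝ (Fin d) => G ‖y‖ := funext hRG
    rw [hRfun]
    apply ContinuousAt.continuousWithinAt
    have hGc : ContinuousAt G ‖x‖ := by
      apply ContinuousAt.mul
      · exact (continuous_const.mul (continuous_const.sub hκt.continuous)).continuousAt
      · apply ContinuousAt.add
        · exact ((hκ.continuous_deriv (by simp)).continuousAt).mul
            ((Real.continuousAt_rpow_const _ _ (Or.inl hrne)).mul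
              (Real.continuous_cos.continuousAt.comp
                ((continuous_const.continuousAt).mul
                  (Real.continuousAt_rpow_const _ _ (Or.inl hrne)))))
        · exact continuousAt_const.mul
            (((continuous_const.sub hκ.continuous).continuousAt).mul
              ((Real.continuousAt_rpow_const _ _ (Or.inl hrne)).mul
                (Real.continuous_cos.continuousAt.comp
                  ((continuous_const.continuousAt).mul
                    (Real.continuousAt_rpow_const _ _ (Or.inl hrne))))))
    exact hGc.comp continuous_norm.continuousAt
  · -- vanishing near 0
    intro x hx
    have h1 : κt ‖x‖ = 1 := hκtone ‖x‖ ⟨by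
      have := norm_nonneg x; linarith, by linarith⟩
    rw [hRG, hGdef, h1]; ring
  · -- bound
    refine ⟨2 * (|w| * (1 + Ct) * (Cd + (1 + ε) * (1 + Cκ))), fun x => ?_⟩
    rcases lt_or_ge ‖x‖ 1 with h | h
    · have hκr : κ ‖x‖ = 1 := hκone ‖x‖ ⟨by have := norm_nonneg x; linarith, h.le⟩
      have hdκ : deriv κ ‖x‖ = 0 := by
        have hev : κ =ᶠ[nhds ‖x‖] fun _ => (1 : ℝ) := by
          filter_upwards [Ioo_mem_nhds
            (lt_of_lt_of_le (by norm_num : (-1 : ℝ) < 0) (norm_nonneg x)) h] with t ht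
          exact hκone t ⟨ht.1.le, ht.2.le⟩
        rw [hev.deriv_eq, deriv_const]
      have hG0 : G ‖x‖ = 0 := by rw [hGdef, hκr, hdκ]; ring
      rw [hRG, hG0, abs_zero, mul_zero]
      positivity
    · -- main estimate for ‖x‖ ≥ 1
      set r := ‖x‖ with hrdef
      have hr0 : (0 : ℝ) < r := lt_of_lt_of_le one_pos h
      have ha0 : (0 : ℝ) ≤ r ^ (-1 - ε) := Real.rpow_nonneg hr0.le _
      have he0 : (0 : ℝ) ≤ r ^ (-2 - ε) := Real.rpow_nonneg hr0.le _
      have habs : ∀ t : ℝ, |1 - κt t| ≤ 1 + Ct := fun t =>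
        calc |1 - κt t| ≤ |(1:ℝ)| + |κt t| := abs_sub _ _
          _ ≤ 1 + Ct := by rw [abs_one]; exact add_le_add le_rfl (hCt t)
      have habs' : ∀ t : ℝ, |1 - κ t| ≤ 1 + Cκ := fun t =>
        calc |1 - κ t| ≤ |(1:ℝ)| + |κ t| := abs_sub _ _
          _ ≤ 1 + Cκ := by rw [abs_one]; exact add_le_add le_rfl (hCκ t)
      have hGb : |G r| ≤ |w| * (1 + Ct) * (Cd * r ^ (-1 - ε) + (1 + ε) * ((1 + Cκ) * r ^ (-2 - ε))) := by
        rw [hG]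
        have hinner : |deriv κ r * (r ^ (-1 - ε) * Real.cos (k * r ^ α)) +
            (1 + ε) * ((1 - κ r) * (r ^ (-2 - ε) * Real.cos (k * r ^ α)))| ≤
            Cd * r ^ (-1 - ε) + (1 + ε) * ((1 + Cκ) * r ^ (-2 - ε)) := by
          refine le_trans (abs_add_le _ _) ?_
          have t1 : |deriv κ r * (r ^ (-1 - ε) * Real.cos (k * r ^ α))| ≤ Cd * r ^ (-1 - ε) := by
            rw [abs_mul, abs_mul, abs_of_nonneg ha0]
            calc |deriv κ r| * (r ^ (-1 - ε) * |Real.cos (k * r ^ α)|)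
                ≤ Cd * (r ^ (-1 - ε) * 1) := by
                  apply mul_le_mul (hCd r) ?_ (by positivity) hCd0
                  exact mul_le_mul_of_nonneg_left (Real.abs_cos_le_one _) ha0
              _ = Cd * r ^ (-1 - ε) := by ring
          have t2 : |(1 + ε) * ((1 - κ r) * (r ^ (-2 - ε) * Real.cos (k * r ^ α)))| ≤
              (1 + ε) * ((1 + Cκ) * r ^ (-2 - ε)) := by
            rw [abs_mul, abs_mul, abs_mul, abs_of_nonneg (by positivity : (0:ℝ) ≤ 1 + ε),
              abs_of_nonneg he0]
            apply mul_le_mul_of_nonneg_left ?_ (by positivity)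
            calc |1 - κ r| * (r ^ (-2 - ε) * |Real.cos (k * r ^ α)|)
                ≤ (1 + Cκ) * (r ^ (-2 - ε) * 1) := by
                  apply mul_le_mul (habs' r) ?_ (by positivity) (by positivity)
                  exact mul_le_mul_of_nonneg_left (Real.abs_cos_le_one _) he0
              _ = (1 + Cκ) * r ^ (-2 - ε) := by ring
          linarith
        calc |w * (1 - κt r) * (deriv κ r * (r ^ (-1 - ε) * Real.cos (k * r ^ α)) +
              (1 + ε) * ((1 - κ r) * (r ^ (-2 - ε) * Real.cos (k * r ^ α))))|
            = |w| * (|1 - κt r| * |deriv κ r * (r ^ (-1 - ε) * Real.cos (k * r ^ α)) +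
              (1 + ε) * ((1 - κ r) * (r ^ (-2 - ε) * Real.cos (k * r ^ α)))|) := by
              rw [abs_mul, abs_mul]; ring
          _ ≤ |w| * ((1 + Ct) * (Cd * r ^ (-1 - ε) + (1 + ε) * ((1 + Cκ) * r ^ (-2 - ε)))) := by
              apply mul_le_mul_of_nonneg_left ?_ (abs_nonneg w)
              exact mul_le_mul (habs r) hinner (abs_nonneg _) (by positivity)
          _ = |w| * (1 + Ct) * (Cd * r ^ (-1 - ε) + (1 + ε) * ((1 + Cκ) * r ^ (-2 - ε))) := by
              ring
      have hApow : (Real.sqrt (1 + r ^ 2)) ^ (1 + ρ) ≤ 2 * r ^ (1 + ρ) := by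
        have hs : Real.sqrt (1 + r ^ 2) ≤ Real.sqrt 2 * r := by
          rw [show Real.sqrt 2 * r = Real.sqrt (2 * r ^ 2) by
            rw [Real.sqrt_mul (by norm_num), Real.sqrt_sq hr0.le]]
          apply Real.sqrt_le_sqrt; nlinarith
        calc (Real.sqrt (1 + r ^ 2)) ^ (1 + ρ) ≤ (Real.sqrt 2 * r) ^ (1 + ρ) :=
              Real.rpow_le_rpow (Real.sqrt_nonneg _) hs (by positivity)
          _ = (Real.sqrt 2) ^ (1 + ρ) * r ^ (1 + ρ) :=
              Real.mul_rpow (Real.sqrt_nonneg _) hr0.le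
          _ ≤ 2 * r ^ (1 + ρ) := by
              apply mul_le_mul_of_nonneg_right ?_ (Real.rpow_nonneg hr0.le _)
              calc (Real.sqrt 2) ^ (1 + ρ) ≤ (Real.sqrt 2) ^ ((1 : ℝ) + 1) :=
                    Real.rpow_le_rpow_of_exponent_le
                      (Real.one_le_sqrt.mpr (by norm_num)) (by linarith)
                _ = 2 := by
                    rw [Real.rpow_add (by positivity), Real.rpow_one,
                      Real.mul_self_sqrt (by norm_num)]
      have hcomb1 : r ^ (1 + ρ) * r ^ (-1 - ε) ≤ 1 := by
        rw [← Real.rpow_add hr0]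
        exact Real.rpow_le_one_of_one_le_of_nonpos h (by linarith)
      have hcomb2 : r ^ (1 + ρ) * r ^ (-2 - ε) ≤ 1 := by
        rw [← Real.rpow_add hr0]
        exact Real.rpow_le_one_of_one_le_of_nonpos h (by linarith)
      have hrp0 : (0:ℝ) ≤ r ^ (1 + ρ) := Real.rpow_nonneg hr0.le _
      calc (Real.sqrt (1 + ‖x‖ ^ 2)) ^ (1 + ρ) * |R x|
          ≤ (2 * r ^ (1 + ρ)) *
            (|w| * (1 + Ct) * (Cd * r ^ (-1 - ε) + (1 + ε) * ((1 + Cκ) * r ^ (-2 - ε)))) := by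
            rw [hRG]
            exact mul_le_mul hApow hGb (abs_nonneg _) (by positivity)
        _ = 2 * (|w| * (1 + Ct)) * (Cd * (r ^ (1 + ρ) * r ^ (-1 - ε)) +
              (1 + ε) * ((1 + Cκ) * (r ^ (1 + ρ) * r ^ (-2 - ε)))) := by ring
        _ ≤ 2 * (|w| * (1 + Ct)) * (Cd * 1 + (1 + ε) * ((1 + Cκ) * 1)) := by
            apply mul_le_mul_of_nonneg_left ?_ (by positivity)
            apply add_le_add
            · exact mul_le_mul_of_nonneg_left hcomb1 hCd0
            · exact mul_le_mul_of_nonneg_left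
                (mul_le_mul_of_nonneg_left hcomb2 (by positivity)) (by positivity)
        _ = 2 * (|w| * (1 + Ct) * (Cd + (1 + ε) * (1 + Cκ))) := by ring
end

section
/- Let α ≥ 1 and γ := 1 − β + |α−1| − ε ≥ 0 with ε, β > 0. With a_n, b_n as in the oscillation lemma (a_n = (1/k)(π/4 + 2nπ), b_n = a_n + π/(2k), k > 0), the series Σ_{n≥N} ∫_{a_n^{1/α}}^{b_n^{1/α}} r^{−β+|α−1|−ε} dr diverges for any N ∈ ℕ; in fact the n-th term is bounded below by c · n^{γ/α − 1} for some c > 0 and all large n. -/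
/-!
Substituting `r = t ^ (1 / α)` turns the `n`-th term into `(1 / α) ∫_{a n}^{b n} t ^ (γ / α - 1) dt`.
Since `γ ≤ α` the integrand is decreasing, so the term is at least
`(1 / α) (b n) ^ (γ / α - 1) (b n - a n)`, and `b n ≤ (3π / k) n` turns this into `c n ^ (γ / α - 1)`.
As `γ / α - 1 ≥ -1`, comparison with the harmonic-type series `∑ n ^ (γ / α - 1)` gives divergence.
-/

open intervalIntegral Set
open scoped Interval

lemma integral_rpow_rpow_endpoints {a b α : ℝ} (ha : 0 < a) (hb : 0 < b) (p : ℝ) :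
    ∫ r in a ^ (1 / α)..b ^ (1 / α), r ^ p = 1 / α * ∫ t in a..b, t ^ ((p + 1) / α - 1) := by
  have hpos : ∀ t ∈ [[a, b]], 0 < t := fun t ht => (lt_min ha hb).trans_le ht.1
  have hderiv : ∀ t ∈ [[a, b]], HasDerivAt (· ^ (1 / α)) (1 / α * t ^ (1 / α - 1)) t :=
    fun t ht => Real.hasDerivAt_rpow_const (Or.inl (hpos t ht).ne')
  have hcont : ContinuousOn (fun r : ℝ => r ^ p) ((· ^ (1 / α)) '' [[a, b]]) := by
    rintro _ ⟨t, ht, rfl⟩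
    exact (Real.continuousAt_rpow_const _ _ (Or.inl (Real.rpow_pos_of_pos (hpos t ht) _).ne'))
      |>.continuousWithinAt
  rw [← integral_comp_mul_deriv' hderiv ?_ hcont, ← integral_const_mul]
  · refine integral_congr fun t ht => ?_
    have ht0 := hpos t ht
    simp only [Function.comp_apply, ← Real.rpow_mul ht0.le]
    rw [mul_left_comm, ← Real.rpow_add ht0]
    congr 2
    ring
  · exact continuousOn_const.mul fun t ht =>
      (Real.continuousAt_rpow_const _ _ (Or.inl (hpos t ht).ne')).continuousWithinAt

lemma mul_sub_le_integral_rpow {a b s : ℝ} (ha : 0 < a) (hab : a ≤ b) (hs : s ≤ 0) :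
    b ^ s * (b - a) ≤ ∫ t in a..b, t ^ s := by
  have h := integral_mono_on (μ := MeasureTheory.volume) hab intervalIntegrable_const
    (intervalIntegrable_rpow (Or.inr (notMem_uIcc_of_lt ha (ha.trans_le hab))))
    (fun t ht => Real.rpow_le_rpow_of_nonpos (ha.trans_le ht.1) ht.2 hs)
  simpa [mul_comm] using h

lemma mul_sub_le_integral_rpow_rpow_endpoints {a b α p : ℝ} (ha : 0 < a) (hab : a ≤ b)
    (hα : 0 ≤ α) (hs : (p + 1) / α - 1 ≤ 0) :
    1 / α * b ^ ((p + 1) / α - 1) * (b - a) ≤ ∫ r in a ^ (1 / α)..b ^ (1 / α), r ^ p := by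
  rw [integral_rpow_rpow_endpoints ha (ha.trans_le hab), mul_assoc]
  exact mul_le_mul_of_nonneg_left (mul_sub_le_integral_rpow ha hab hs) (by positivity)

open Filter in
lemma not_summable_of_eventually_mul_rpow_le {u : ℕ → ℝ} {c s : ℝ} (hc : 0 < c) (hs : -1 ≤ s)
    (h : ∀ᶠ n : ℕ in atTop, c * (n : ℝ) ^ s ≤ u n) : ¬ Summable u := by
  intro hu
  have hsum : Summable fun n : ℕ => c * (n : ℝ) ^ s :=
    hu.of_norm_bounded_eventually_nat <| h.mono fun n hn => by
      rwa [Real.norm_of_nonneg (by positivity)]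
  have := Real.summable_nat_rpow.mp ((summable_mul_left_iff hc.ne').mp hsum)
  linarith

/-- With `γ = 1 − β + |α−1| − ε ≥ 0`, `a_n = (1/k)(π/4 + 2nπ)`, `b_n = a_n + π/(2k)`,
the series `Σ_{n≥N} ∫_{a_n^{1/α}}^{b_n^{1/α}} r^{−β+|α−1|−ε} dr` diverges for any `N`,
and its `n`-th term is bounded below by `c·n^{γ/α−1}` for some `c > 0` and all large `n`. -/
theorem oscillation_series_diverges
    (α β ε k : ℝ) (hα : 1 ≤ α) (hβ : 0 < β) (hε : 0 < ε) (hk : 0 < k)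
    (γ : ℝ) (hγdef : γ = 1 - β + |α - 1| - ε) (hγ : 0 ≤ γ)
    (a b : ℕ → ℝ)
    (ha : ∀ n, a n = (1 / k) * (Real.pi / 4 + 2 * n * Real.pi))
    (hb : ∀ n, b n = a n + Real.pi / (2 * k))
    (u : ℕ → ℝ)
    (hu : ∀ n, u n = ∫ r in (a n) ^ (1 / α)..(b n) ^ (1 / α), r ^ (-β + |α - 1| - ε)) :
    (∃ c > (0 : ℝ), ∃ M : ℕ, ∀ n ≥ M, c * (n : ℝ) ^ (γ / α - 1) ≤ u n) ∧
      ∀ N : ℕ, ¬ Summable (fun n : ℕ => u (n + N)) := by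
  have habs : |α - 1| = α - 1 := abs_of_nonneg (by linarith)
  have hexp_eq : (-β + |α - 1| - ε + 1) / α - 1 = γ / α - 1 := by rw [hγdef, habs]; ring
  have hexp_nonpos : γ / α - 1 ≤ 0 := by
    rw [sub_nonpos, div_le_one (by linarith), hγdef, habs]; linarith
  have hexp_ge : -1 ≤ γ / α - 1 := by have := div_nonneg hγ (by linarith : (0 : ℝ) ≤ α); linarith
  have bound : ∀ n : ℕ, n ≥ 1 →
      1 / α * (3 * Real.pi / k) ^ (γ / α - 1) * (Real.pi / (2 * k)) * (n : ℝ) ^ (γ / α - 1) ≤ u n := by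
    intro n hn
    have hn1 : (1 : ℝ) ≤ n := by exact_mod_cast hn
    have han : 0 < a n := by rw [ha]; positivity
    have hgap : b n - a n = Real.pi / (2 * k) := by rw [hb]; ring
    have hab : a n ≤ b n := by linarith [show 0 < Real.pi / (2 * k) by positivity]
    have hbn : b n ≤ 3 * Real.pi / k * n := by
      have hdiff : 3 * Real.pi / k * n - b n = Real.pi * (n - 3 / 4) / k := by
        rw [hb, ha]; field_simp; ring
      have : 0 ≤ Real.pi * (n - 3 / 4) / k := div_nonneg (by nlinarith [Real.pi_pos]) hk.le
      linarith
    calc _ = 1 / α * (3 * Real.pi / k * n) ^ (γ / α - 1) * (b n - a n) := by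
          rw [Real.mul_rpow (by positivity) (by positivity), hgap]; ring
      _ ≤ 1 / α * (b n) ^ (γ / α - 1) * (b n - a n) := by
          gcongr 1 / α * ?_ * _
          exact Real.rpow_le_rpow_of_nonpos (han.trans_le hab) hbn hexp_nonpos
      _ ≤ u n := by
          have := mul_sub_le_integral_rpow_rpow_endpoints (p := -β + |α - 1| - ε) han hab
            (by linarith) (hexp_eq ▸ hexp_nonpos)
          rwa [hexp_eq, ← hu] at this
  refine ⟨⟨_, by positivity, 1, bound⟩, fun N hN => ?_⟩
  exact not_summable_of_eventually_mul_rpow_le (by positivity) hexp_ge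
    ((Filter.eventually_ge_atTop 1).mono bound) ((summable_nat_add_iff N).mp hN)
end
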